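/- arXiv:2302.02265 — 6 statements merged into one kernel-verified Lean document; each statement's English description precedes it below -/
import Mathlib

section
/- Let β ≥ 0 and let v_β be the unique solution of IVP(β). If y > 0 is a local maximizer of v_β, then v_β(y) ≤ h/η. -/
/-!
At an interior local maximum `y` we have `v'(y) = 0`, and differentiating the equation gives
`(σ²/2)·v''(y) = η·(v(y) − h/η)`. A local maximum forces `v''(y) ≤ 0`: if `v''(y) > 0`, the
second-derivative test makes `y` a local minimum as well, so `v` is locally constant and
`v''(y) = 0`.
-/

open Set Filter

noncomputable section

/-- `IsIVP σ η αh h r a β v v'` says that `v : [0,∞) → ℝ` is a C¹ solution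
(with derivative `v'`) of the initial value problem IVP(β):
`(σ²/2)·v′(y) = β + (αh/4)·v(y)² + η·y·(v(y) − h/η) − a·v(y)` for `y ≥ 0`, `v(0) = −r`. -/
def IsIVP (σ η αh h r a β : ℝ) (v v' : ℝ → ℝ) : Prop :=
  ContinuousOn v' (Set.Ici 0) ∧
  (∀ y ∈ Set.Ici (0:ℝ), HasDerivWithinAt v (v' y) (Set.Ici 0) y) ∧
  (∀ y ∈ Set.Ici (0:ℝ),
    σ ^ 2 / 2 * v' y = β + αh / 4 * (v y) ^ 2 + η * y * (v y - h / η) - a * v y) ∧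
  v 0 = -r

open Topology

theorem IsLocalMax.nonpos_of_hasDerivAt_of_hasDerivAt {f f' : ℝ → ℝ} {x₀ c : ℝ}
    (hmax : IsLocalMax f x₀) (hf : ∀ᶠ x in 𝓝 x₀, HasDerivAt f (f' x) x)
    (hf' : HasDerivAt f' c x₀) : c ≤ 0 := by
  by_contra! hc
  have hderiv : deriv f =ᶠ[𝓝 x₀] f' := hf.mono fun x hx => hx.deriv
  have hcrit : deriv f x₀ = 0 := hmax.deriv_eq_zero
  have hmin : IsLocalMin f x₀ :=
    isLocalMin_of_deriv_deriv_pos (by rwa [hderiv.deriv_eq, hf'.deriv])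
      hcrit hf.self_of_nhds.continuousAt
  have hconst : f =ᶠ[𝓝 x₀] fun _ => f x₀ := by
    filter_upwards [hmin, hmax] with x hle hge using le_antisymm hge hle
  have hf'_zero : f' =ᶠ[𝓝 x₀] fun _ => 0 := by
    filter_upwards [hderiv.symm, hconst.deriv] with x h₁ h₂
    rw [h₁, h₂, deriv_const]
  exact hc.ne ((hasDerivAt_const x₀ (0 : ℝ)).congr_of_eventuallyEq hf'_zero |>.unique hf')

namespace IsIVP

variable {σ η αh h r a β : ℝ} {v v' : ℝ → ℝ}

theorem hasDerivAt (hv : IsIVP σ η αh h r a β v v') {y : ℝ} (hy : 0 < y) :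
    HasDerivAt v (v' y) y :=
  (hv.2.1 y hy.le).hasDerivAt (Ici_mem_nhds hy)

theorem eventually_hasDerivAt (hv : IsIVP σ η αh h r a β v v') {y : ℝ} (hy : 0 < y) :
    ∀ᶠ x in 𝓝 y, HasDerivAt v (v' x) x := by
  filter_upwards [eventually_gt_nhds hy] with x hx using hv.hasDerivAt hx

theorem eq_rhs (hv : IsIVP σ η αh h r a β v v') (hσ : σ ≠ 0) {y : ℝ} (hy : 0 ≤ y) :
    v' y = 2 / σ ^ 2 * (β + αh / 4 * v y ^ 2 + η * y * (v y - h / η) - a * v y) := by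
  rw [← hv.2.2.1 y hy]
  field_simp

theorem hasDerivAt_deriv (hv : IsIVP σ η αh h r a β v v') (hσ : σ ≠ 0) {y : ℝ} (hy : 0 < y) :
    HasDerivAt v' (2 / σ ^ 2 * (αh / 2 * v y * v' y + η * (v y - h / η) + η * y * v' y
      - a * v' y)) y := by
  have hvy := hv.hasDerivAt hy
  have hrhs : HasDerivAt (fun x => β + αh / 4 * v x ^ 2 + η * x * (v x - h / η) - a * v x)
      (αh / 2 * v y * v' y + η * (v y - h / η) + η * y * v' y - a * v' y) y := by
    have := ((((hvy.pow 2).const_mul (αh / 4)).const_add β).add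
      (((hasDerivAt_id y).const_mul η).mul (hvy.sub_const (h / η)))).sub (hvy.const_mul a)
    exact this.congr_deriv (by simp only [id]; ring)
  refine (hrhs.const_mul (2 / σ ^ 2)).congr_of_eventuallyEq ?_
  filter_upwards [eventually_gt_nhds hy] with x hx using hv.eq_rhs hσ hx.le

end IsIVP

theorem stmt_3_general (σ η αh h r a : ℝ) (hσ : 0 < σ) (hη : 0 < η)
    (β : ℝ)
    (v v' : ℝ → ℝ) (hIVP : IsIVP σ η αh h r a β v v')
    (y : ℝ) (hy : 0 < y) (hmax : IsLocalMax v y) :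
    v y ≤ h / η := by
  have hcrit : v' y = 0 := hmax.hasDerivAt_eq_zero (hIVP.hasDerivAt hy)
  have hsecond := hmax.nonpos_of_hasDerivAt_of_hasDerivAt (hIVP.eventually_hasDerivAt hy)
    (hIVP.hasDerivAt_deriv hσ.ne' hy)
  simp only [hcrit, mul_zero, add_zero, sub_zero, zero_add] at hsecond
  have hfactor : η * (v y - h / η) ≤ 0 :=
    nonpos_of_mul_nonpos_right hsecond (by positivity)
  have hdiff : v y - h / η ≤ 0 := nonpos_of_mul_nonpos_right hfactor hη
  linarith

/-- If `y > 0` is a local maximizer of the solution `v_β` of IVP(β), then `v_β(y) ≤ h/η`. -/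
theorem stmt_3 (σ η αh h r a : ℝ) (hσ : 0 < σ) (hη : 0 < η) (hαh : 0 < αh)
    (hh : 0 < h) (hr : 0 < r) (β : ℝ) (hβ : 0 ≤ β)
    (v v' : ℝ → ℝ) (hIVP : IsIVP σ η αh h r a β v v')
    (y : ℝ) (hy : 0 < y) (hmax : IsLocalMax v y) :
    v y ≤ h / η :=
  stmt_3_general σ η αh h r a hσ hη β v v' hIVP y hy hmax
end
end

section
/- Suppose the parameters are in Case 1 or Case 2. Then the solution v_β of IVP(β) increases to its supremum; precisely, there do not exist points 0 ≤ x₁ < x₂ < x₃ such that v_β(x₁) = v_β(x₂) = v_β(x₃) while v_β′(x₁) > 0, v_β′(x₂) < 0, and v_β′(x₃) > 0. Moreover v_β′(0) > 0. -/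
/-!
At points where `v` takes a common value `c`, the equation expresses `(σ²/2)·v′(y)` as the
affine function `β + (αh/4)c² − ac + η(c − h/η)·y` of `y`. An affine function positive at
`x₁` and `x₃` is positive on `[x₁, x₃]`, so the sign pattern `+, −, +` is impossible.
At `y = 0` the right-hand side is `β + (αh/4)r² + ar`, positive in both cases.
-/

open Set Filter

noncomputable section

theorem add_mul_pos_of_mem_Icc {p q x₁ x₂ x₃ : ℝ} (hx : x₂ ∈ Icc x₁ x₃)
    (h₁ : 0 < p + q * x₁) (h₃ : 0 < p + q * x₃) : 0 < p + q * x₂ := by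
  obtain ⟨h₁₂, h₂₃⟩ := hx
  rcases le_total 0 q with hq | hq <;> nlinarith

theorem initial_rhs_pos {αh r a β : ℝ} (hr : 0 < r)
    (hcase : (-(αh / 4) * r < a ∧ 0 ≤ β) ∨
      (a ≤ -(αh / 4) * r ∧ -a * r - αh / 4 * r ^ 2 < β)) :
    0 < β + αh / 4 * r ^ 2 + a * r := by
  rcases hcase with ⟨ha, hβ⟩ | ⟨-, hβ⟩ <;> nlinarith

namespace IsIVP

variable {σ η αh h r a β : ℝ} {v v' : ℝ → ℝ}

theorem deriv_pos_iff (hv : IsIVP σ η αh h r a β v v') (hσ : σ ≠ 0) {y : ℝ} (hy : 0 ≤ y) :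
    0 < v' y ↔ 0 < (β + αh / 4 * v y ^ 2 - a * v y) + η * (v y - h / η) * y := by
  have hσ2 : 0 < σ ^ 2 / 2 := by positivity
  rw [← mul_pos_iff_of_pos_left hσ2, hv.2.2.1 y hy]
  ring_nf

theorem deriv_zero_pos (hv : IsIVP σ η αh h r a β v v') (hσ : σ ≠ 0)
    (hrhs : 0 < β + αh / 4 * r ^ 2 + a * r) : 0 < v' 0 := by
  rw [hv.deriv_pos_iff hσ le_rfl, hv.2.2.2]
  linarith

theorem deriv_pos_of_eq_of_eq (hv : IsIVP σ η αh h r a β v v') (hσ : σ ≠ 0)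
    {x₁ x₂ x₃ : ℝ} (h₀ : 0 ≤ x₁) (h₁₂ : x₁ ≤ x₂) (h₂₃ : x₂ ≤ x₃)
    (e₁₂ : v x₁ = v x₂) (e₂₃ : v x₂ = v x₃) (d₁ : 0 < v' x₁) (d₃ : 0 < v' x₃) :
    0 < v' x₂ := by
  rw [hv.deriv_pos_iff hσ h₀, e₁₂] at d₁
  rw [hv.deriv_pos_iff hσ (h₀.trans (h₁₂.trans h₂₃)), ← e₂₃] at d₃
  rw [hv.deriv_pos_iff hσ (h₀.trans h₁₂)]
  exact add_mul_pos_of_mem_Icc ⟨h₁₂, h₂₃⟩ d₁ d₃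

end IsIVP

theorem stmt_4_general (σ η αh h r a β : ℝ) (hσ : 0 < σ)
    (hr : 0 < r)
    (hcase : (-(αh / 4) * r < a ∧ 0 ≤ β) ∨
      (a ≤ -(αh / 4) * r ∧ -a * r - αh / 4 * r ^ 2 < β))
    (v v' : ℝ → ℝ) (hIVP : IsIVP σ η αh h r a β v v') :
    0 < v' 0 ∧
    ¬ ∃ x₁ x₂ x₃ : ℝ, 0 ≤ x₁ ∧ x₁ < x₂ ∧ x₂ < x₃ ∧
      v x₁ = v x₂ ∧ v x₂ = v x₃ ∧ 0 < v' x₁ ∧ v' x₂ < 0 ∧ 0 < v' x₃ := by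
  refine ⟨hIVP.deriv_zero_pos hσ.ne' (initial_rhs_pos hr hcase), ?_⟩
  rintro ⟨x₁, x₂, x₃, h₀, h₁₂, h₂₃, e₁₂, e₂₃, d₁, d₂, d₃⟩
  exact d₂.not_gt (hIVP.deriv_pos_of_eq_of_eq hσ.ne' h₀ h₁₂.le h₂₃.le e₁₂ e₂₃ d₁ d₃)

/-- In Case 1 or Case 2, the solution `v_β` of IVP(β) increases to its supremum:
`v_β′(0) > 0` and there are no points `0 ≤ x₁ < x₂ < x₃` with equal values of `v_β`
and derivative signs `+, −, +`. -/
theorem stmt_4 (σ η αh h r a β : ℝ) (hσ : 0 < σ) (hη : 0 < η) (hαh : 0 < αh)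
    (hh : 0 < h) (hr : 0 < r)
    (hcase : (-(αh / 4) * r < a ∧ 0 ≤ β) ∨
      (a ≤ -(αh / 4) * r ∧ -a * r - αh / 4 * r ^ 2 < β))
    (v v' : ℝ → ℝ) (hIVP : IsIVP σ η αh h r a β v v') :
    0 < v' 0 ∧
    ¬ ∃ x₁ x₂ x₃ : ℝ, 0 ≤ x₁ ∧ x₁ < x₂ ∧ x₂ < x₃ ∧
      v x₁ = v x₂ ∧ v x₂ = v x₃ ∧ 0 < v' x₁ ∧ v' x₂ < 0 ∧ 0 < v' x₃ :=
  stmt_4_general σ η αh h r a β hσ hr hcase v v' hIVP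
end
end

section
/- Suppose the parameters are in Case 1 or Case 2, and let 0 ≤ x₁ < x₂. If the solution v_β of IVP(β) is constant on the interval (x₁, x₂), then necessarily β = a·(h/η) − (α̂/4)·(h/η)², and v_β(x) = h/η for all x ∈ (x₁, x₂). Conversely, if β ≠ a·(h/η) − (α̂/4)·(h/η)², then there is no nonempty open interval on which v_β is constant. -/
open Set Filter

noncomputable section

/-!
On an interval where `v` is constant, `v' = 0`, so the right-hand side of the ODE,
`(β + (αh/4)·c² − a·c) + η·(c − h/η)·y`, is an affine function of `y` vanishing on a
nonempty open interval. Both of its coefficients therefore vanish: the slope forces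
`c = h/η`, and then the constant term gives `β = a·(h/η) − (αh/4)·(h/η)²`.
-/

lemma affine_coeffs_eq_zero_of_vanishOn_Ioo {p q x₁ x₂ : ℝ} (hx₁₂ : x₁ < x₂)
    (h : ∀ y ∈ Ioo x₁ x₂, p + q * y = 0) : p = 0 ∧ q = 0 := by
  have h₁ := h ((2 * x₁ + x₂) / 3) ⟨by linarith, by linarith⟩
  have h₂ := h ((x₁ + 2 * x₂) / 3) ⟨by linarith, by linarith⟩
  have hdiff : q * ((x₂ - x₁) / 3) = 0 := by linear_combination h₂ - h₁
  have hq : q = 0 := (mul_eq_zero.mp hdiff).resolve_right (by linarith)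
  exact ⟨by simpa [hq] using h₁, hq⟩

lemma hasDerivWithinAt_Ici_eq_zero_of_eqOn_Ioo {v : ℝ → ℝ} {d c x₁ x₂ y : ℝ}
    (hx₁ : 0 ≤ x₁) (hc : ∀ x ∈ Ioo x₁ x₂, v x = c) (hy : y ∈ Ioo x₁ x₂)
    (hv : HasDerivWithinAt v d (Ici 0) y) : d = 0 := by
  have hv : HasDerivAt v d y := hv.hasDerivAt (Ici_mem_nhds (hx₁.trans_lt hy.1))
  have hconst : HasDerivAt v 0 y :=
    (hasDerivAt_const y c).congr_of_eventuallyEq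
      ((isOpen_Ioo.eventually_mem hy).mono hc)
  exact hv.unique hconst

lemma IsIVP.eq_of_eqOn_Ioo {σ η αh h r a β : ℝ} {v v' : ℝ → ℝ}
    (hIVP : IsIVP σ η αh h r a β v v') (hη : η ≠ 0) {x₁ x₂ c : ℝ} (hx₁ : 0 ≤ x₁)
    (hx₁₂ : x₁ < x₂) (hc : ∀ x ∈ Ioo x₁ x₂, v x = c) :
    β = a * (h / η) - αh / 4 * (h / η) ^ 2 ∧ c = h / η := by
  obtain ⟨-, hderiv, hode, -⟩ := hIVP
  have hrhs : ∀ y ∈ Ioo x₁ x₂,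
      (β + αh / 4 * c ^ 2 - a * c) + η * (c - h / η) * y = 0 := by
    intro y hy
    have hy₀ : y ∈ Ici (0 : ℝ) := hx₁.trans hy.1.le
    have hv' : v' y = 0 :=
      hasDerivWithinAt_Ici_eq_zero_of_eqOn_Ioo hx₁ hc hy (hderiv y hy₀)
    have hode_y := hode y hy₀
    rw [hv', hc y hy] at hode_y
    linear_combination -hode_y
  obtain ⟨hconst, hslope⟩ := affine_coeffs_eq_zero_of_vanishOn_Ioo hx₁₂ hrhs
  have hc : c = h / η := sub_eq_zero.mp ((mul_eq_zero.mp hslope).resolve_left hη)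
  subst hc
  exact ⟨by linear_combination hconst, rfl⟩

theorem stmt_5_general (σ η αh h r a β : ℝ) (hη : 0 < η)
    (v v' : ℝ → ℝ) (hIVP : IsIVP σ η αh h r a β v v')
    (x₁ x₂ : ℝ) (hx₁ : 0 ≤ x₁) (hx₁₂ : x₁ < x₂) :
    ((∃ c : ℝ, ∀ x ∈ Set.Ioo x₁ x₂, v x = c) →
      β = a * (h / η) - αh / 4 * (h / η) ^ 2 ∧ ∀ x ∈ Set.Ioo x₁ x₂, v x = h / η) ∧
    (β ≠ a * (h / η) - αh / 4 * (h / η) ^ 2 →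
      ∀ y₁ y₂ : ℝ, 0 ≤ y₁ → y₁ < y₂ → ¬ ∃ c : ℝ, ∀ x ∈ Set.Ioo y₁ y₂, v x = c) := by
  refine ⟨fun ⟨c, hc⟩ => ?_, fun hβ y₁ y₂ hy₁ hy₁₂ ⟨c, hc⟩ => ?_⟩
  · obtain ⟨hβ, rfl⟩ := hIVP.eq_of_eqOn_Ioo hη.ne' hx₁ hx₁₂ hc
    exact ⟨hβ, hc⟩
  · exact hβ (hIVP.eq_of_eqOn_Ioo hη.ne' hy₁ hy₁₂ hc).1

/-- In Case 1 or Case 2: if `v_β` is constant on `(x₁,x₂)` then necessarily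
`β = a·(h/η) − (αh/4)·(h/η)²` and `v_β ≡ h/η` on `(x₁,x₂)`; conversely if
`β ≠ a·(h/η) − (αh/4)·(h/η)²` then `v_β` is constant on no nonempty open interval. -/
theorem stmt_5 (σ η αh h r a β : ℝ) (hσ : 0 < σ) (hη : 0 < η) (hαh : 0 < αh)
    (hh : 0 < h) (hr : 0 < r)
    (hcase : (-(αh / 4) * r < a ∧ 0 ≤ β) ∨
      (a ≤ -(αh / 4) * r ∧ -a * r - αh / 4 * r ^ 2 < β))
    (v v' : ℝ → ℝ) (hIVP : IsIVP σ η αh h r a β v v')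
    (x₁ x₂ : ℝ) (hx₁ : 0 ≤ x₁) (hx₁₂ : x₁ < x₂) :
    ((∃ c : ℝ, ∀ x ∈ Set.Ioo x₁ x₂, v x = c) →
      β = a * (h / η) - αh / 4 * (h / η) ^ 2 ∧ ∀ x ∈ Set.Ioo x₁ x₂, v x = h / η) ∧
    (β ≠ a * (h / η) - αh / 4 * (h / η) ^ 2 →
      ∀ y₁ y₂ : ℝ, 0 ≤ y₁ → y₁ < y₂ → ¬ ∃ c : ℝ, ∀ x ∈ Set.Ioo y₁ y₂, v x = c) :=
  stmt_5_general σ η αh h r a β hη v v' hIVP x₁ x₂ hx₁ hx₁₂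
end
end

section
/- Suppose the parameters are in Case 1 or Case 2. Then β ∈ 𝓓 if and only if there exists x₀ ∈ (0,∞) such that v_β′(x₀) < 0. -/
/-!
Put `k = h/η`. Differentiating the equation at a zero `t` of `v'` gives
`(σ²/2)·v''(t) = η·(v(t) − k)`. So where `v'` leaves zero downwards `v ≤ k`, and where it
returns to zero from below `v ≥ k`; as `v` strictly decreases in between, `v'` can never
come back to `0` once it has become negative after a point where it was nonnegative.
Both cases make `v'(0) = (2/σ²)·(β + (αh/4)·r² + a·r)` positive, so if `v'` is negative
somewhere, it is nonnegative before the last zero preceding that point and negative after it.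
-/

open Set

theorem exists_zero_Ico_forall_Ioc_neg {f : ℝ → ℝ} {p s : ℝ} (hps : p ≤ s)
    (hf : ContinuousOn f (Icc p s)) (hp : 0 ≤ f p) (hs : f s < 0) :
    ∃ u ∈ Ico p s, f u = 0 ∧ ∀ x ∈ Ioc u s, f x < 0 := by
  set S := Icc p s ∩ f ⁻¹' Ici 0
  have hSbdd : BddAbove S := ⟨s, fun x hx => hx.1.2⟩
  obtain ⟨⟨hpu, hus⟩, hu⟩ : sSup S ∈ S :=
    (hf.preimage_isClosed_of_isClosed isClosed_Icc isClosed_Ici).csSup_mem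
      ⟨p, ⟨le_rfl, hps⟩, hp⟩ hSbdd
  have hneg : ∀ x ∈ Ioc (sSup S) s, f x < 0 := fun x hx => by
    by_contra! hfx
    exact (le_csSup hSbdd ⟨⟨hpu.trans hx.1.le, hx.2⟩, hfx⟩).not_gt hx.1
  have hus : sSup S < s := hus.lt_of_ne fun h => (h ▸ hs).not_ge hu
  obtain ⟨c, hc, hfc⟩ := intermediate_value_Icc' hus.le (hf.mono (Icc_subset_Icc_left hpu))
    ⟨hs.le, hu⟩
  have hcu : c = sSup S := le_antisymm (le_csSup hSbdd ⟨⟨hpu.trans hc.1, hc.2⟩, hfc.ge⟩) hc.1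
  exact ⟨sSup S, ⟨hpu, hus⟩, hcu ▸ hfc, hneg⟩

theorem exists_zero_Ioc_forall_Ico_neg {f : ℝ → ℝ} {s q : ℝ} (hsq : s ≤ q)
    (hf : ContinuousOn f (Icc s q)) (hs : f s < 0) (hq : 0 ≤ f q) :
    ∃ y ∈ Ioc s q, f y = 0 ∧ ∀ x ∈ Ico s y, f x < 0 := by
  obtain ⟨u, hu, hfu, hneg⟩ := exists_zero_Ico_forall_Ioc_neg (f := fun x => f (-x))
    (neg_le_neg hsq) (hf.comp continuousOn_neg fun x hx => ⟨le_neg.mp hx.2, neg_le.mpr hx.1⟩)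
    (by simpa using hq) (by simpa using hs)
  refine ⟨-u, ⟨by linarith [hu.2], by linarith [hu.1]⟩, hfu, fun x hx => ?_⟩
  simpa using hneg (-x) ⟨by linarith [hx.2], by linarith [hx.1]⟩

theorem IsMaxOn.nonneg_of_hasDerivWithinAt_Icc_right {f : ℝ → ℝ} {a b d : ℝ} (hab : a < b)
    (hmax : IsMaxOn f (Icc a b) b) (hf : HasDerivWithinAt f d (Icc a b) b) : 0 ≤ d := by
  have h := hmax.localize.hasFDerivWithinAt_nonpos hf.hasFDerivWithinAt
    (sub_mem_posTangentConeAt_of_segment_subset (segment_symm ℝ b a ▸ segment_eq_Icc hab.le).le)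
  simp only [ContinuousLinearMap.toSpanSingleton_apply, smul_eq_mul] at h
  nlinarith

theorem IsMaxOn.nonpos_of_hasDerivWithinAt_Icc_left {f : ℝ → ℝ} {a b d : ℝ} (hab : a < b)
    (hmax : IsMaxOn f (Icc a b) a) (hf : HasDerivWithinAt f d (Icc a b) a) : d ≤ 0 := by
  have h := hmax.localize.hasFDerivWithinAt_nonpos hf.hasFDerivWithinAt
    (sub_mem_posTangentConeAt_of_segment_subset (segment_eq_Icc hab.le).le)
  simp only [ContinuousLinearMap.toSpanSingleton_apply, smul_eq_mul] at h
  nlinarith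

theorem hasDerivWithinAt_of_eq_zero {σ η αh h a β : ℝ} {v v' : ℝ → ℝ} (hσ : σ ≠ 0)
    (hv : ∀ y ∈ Ici (0:ℝ), HasDerivWithinAt v (v' y) (Ici 0) y)
    (hODE : ∀ y ∈ Ici (0:ℝ),
      σ ^ 2 / 2 * v' y = β + αh / 4 * (v y) ^ 2 + η * y * (v y - h / η) - a * v y)
    {t : ℝ} (ht : 0 ≤ t) (hv't : v' t = 0) :
    HasDerivWithinAt v' (2 * η / σ ^ 2 * (v t - h / η)) (Ici 0) t := by
  have hvt := hv t ht
  have hrhs := (((hasDerivWithinAt_const t (Ici (0:ℝ)) β).add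
    ((hvt.pow 2).const_mul (αh / 4))).add
    (((hasDerivWithinAt_id t _).const_mul η).mul (hvt.sub_const (h / η)))).sub (hvt.const_mul a)
  have hσ2 : σ ^ 2 ≠ 0 := pow_ne_zero 2 hσ
  have hv'_eq : ∀ y ∈ Ici (0:ℝ),
      v' y = 2 / σ ^ 2 * (β + αh / 4 * (v y) ^ 2 + η * y * (v y - h / η) - a * v y) :=
    fun y hy => by rw [← hODE y hy]; field_simp
  refine ((hrhs.const_mul (2 / σ ^ 2)).congr hv'_eq (hv'_eq t ht)).congr_deriv ?_
  simp only [hv't, id]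
  ring

theorem neg_of_nonneg_of_neg_of_le {σ η αh h a β : ℝ} {v v' : ℝ → ℝ} (hσ : σ ≠ 0) (hη : 0 < η)
    (hc : ContinuousOn v' (Ici 0))
    (hv : ∀ y ∈ Ici (0:ℝ), HasDerivWithinAt v (v' y) (Ici 0) y)
    (hODE : ∀ y ∈ Ici (0:ℝ),
      σ ^ 2 / 2 * v' y = β + αh / 4 * (v y) ^ 2 + η * y * (v y - h / η) - a * v y)
    {p s q : ℝ} (hp₀ : 0 ≤ p) (hps : p ≤ s) (hsq : s ≤ q) (hp : 0 ≤ v' p) (hs : v' s < 0) :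
    v' q < 0 := by
  by_contra! hq
  obtain ⟨u, ⟨hpu, hus⟩, hv'u, hneg_left⟩ :=
    exists_zero_Ico_forall_Ioc_neg hps (hc.mono fun x hx => hp₀.trans hx.1) hp hs
  obtain ⟨y, ⟨hsy, -⟩, hv'y, hneg_right⟩ :=
    exists_zero_Ioc_forall_Ico_neg hsq (hc.mono fun x hx => hp₀.trans (hps.trans hx.1)) hs hq
  have huy : u < y := hus.trans hsy
  have hu₀ : 0 ≤ u := hp₀.trans hpu
  have hsub : Icc u y ⊆ Ici 0 := fun x hx => hu₀.trans hx.1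
  have hneg : ∀ x ∈ Ioo u y, v' x < 0 := fun x hx =>
    (le_total x s).elim (fun h => hneg_left x ⟨hx.1, h⟩) fun h => hneg_right x ⟨h, hx.2⟩
  have hnonpos : ∀ x ∈ Icc u y, v' x ≤ 0 := by
    intro x hx
    rcases hx.1.eq_or_lt with rfl | hux
    · exact hv'u.le
    rcases hx.2.eq_or_lt with rfl | hxy
    · exact hv'y.le
    exact (hneg x ⟨hux, hxy⟩).le
  have hk : 0 < 2 * η / σ ^ 2 := by positivity
  have hvu : v u ≤ h / η := by
    have := IsMaxOn.nonpos_of_hasDerivWithinAt_Icc_left huy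
      (isMaxOn_iff.mpr fun x hx => hv'u ▸ hnonpos x hx)
      ((hasDerivWithinAt_of_eq_zero hσ hv hODE hu₀ hv'u).mono hsub)
    nlinarith
  have hvy : h / η ≤ v y := by
    have := IsMaxOn.nonneg_of_hasDerivWithinAt_Icc_right huy
      (isMaxOn_iff.mpr fun x hx => hv'y ▸ hnonpos x hx)
      ((hasDerivWithinAt_of_eq_zero hσ hv hODE (hu₀.trans huy.le) hv'y).mono hsub)
    nlinarith
  have hanti : StrictAntiOn v (Icc u y) := by
    refine strictAntiOn_of_hasDerivWithinAt_neg (f' := v') (convex_Icc u y)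
      (fun x hx => (hv x (hsub hx)).continuousWithinAt.mono hsub) (fun x hx => ?_) fun x hx => ?_
    · exact (hv x (hsub (interior_subset hx))).mono (interior_subset.trans hsub)
    · exact hneg x (by rwa [interior_Icc] at hx)
  linarith [hanti ⟨le_rfl, huy.le⟩ ⟨huy.le, le_rfl⟩ huy]

theorem initial_slope_pos {σ η αh h r a β : ℝ} {v v' : ℝ → ℝ} (hr : 0 < r)
    (hcase : (-(αh / 4) * r < a ∧ 0 ≤ β) ∨
      (a ≤ -(αh / 4) * r ∧ -a * r - αh / 4 * r ^ 2 < β))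
    (hODE : ∀ y ∈ Ici (0:ℝ),
      σ ^ 2 / 2 * v' y = β + αh / 4 * (v y) ^ 2 + η * y * (v y - h / η) - a * v y)
    (hv₀ : v 0 = -r) : 0 < v' 0 := by
  have hrhs : 0 < β + αh / 4 * r ^ 2 + a * r := by
    rcases hcase with ⟨h₁, h₂⟩ | ⟨-, h₂⟩ <;> nlinarith
  have h₀ : σ ^ 2 / 2 * v' 0 = β + αh / 4 * r ^ 2 + a * r := by
    rw [hODE 0 self_mem_Ici, hv₀]
    ring
  exact pos_of_mul_pos_right (h₀ ▸ hrhs) (by positivity)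

theorem exists_pos_lt_zero_of_strictAntiOn_Ici {v v' : ℝ → ℝ}
    (hv : ∀ y ∈ Ici (0:ℝ), HasDerivWithinAt v (v' y) (Ici 0) y) {b : ℝ} (hb : 0 ≤ b)
    (hanti : StrictAntiOn v (Ici b)) : ∃ x₀ : ℝ, 0 < x₀ ∧ v' x₀ < 0 := by
  obtain ⟨c, hc, hv'c⟩ := exists_hasDerivAt_eq_slope v v' (lt_add_one b)
    (fun x hx => (hv x (hb.trans hx.1)).continuousWithinAt.mono fun y hy => hb.trans hy.1)
    fun x hx => (hv x (hb.trans hx.1.le)).hasDerivAt (Ici_mem_nhds (hb.trans_lt hx.1))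
  refine ⟨c, hb.trans_lt hc.1, ?_⟩
  rw [hv'c, add_sub_cancel_left, div_one, sub_neg]
  exact hanti self_mem_Ici (mem_Ici.mpr (lt_add_one b).le) (lt_add_one b)

theorem monotoneOn_Icc_and_strictAntiOn_Ici {v v' : ℝ → ℝ}
    (hv : ∀ y ∈ Ici (0:ℝ), HasDerivWithinAt v (v' y) (Ici 0) y) {u : ℝ} (hu : 0 ≤ u)
    (hnonneg : ∀ x ∈ Ioo 0 u, 0 ≤ v' x) (hneg : ∀ x ∈ Ioi u, v' x < 0) :
    MonotoneOn v (Icc 0 u) ∧ StrictAntiOn v (Ici u) := by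
  have hvc : ContinuousOn v (Ici 0) := fun x hx => (hv x hx).continuousWithinAt
  have hderiv : ∀ D ⊆ Ici (0:ℝ), ∀ x ∈ interior D, HasDerivWithinAt v (v' x) (interior D) x :=
    fun D hD x hx => (hv x (hD (interior_subset hx))).mono (interior_subset.trans hD)
  have hIci : Ici u ⊆ Ici 0 := Ici_subset_Ici.mpr hu
  exact ⟨monotoneOn_of_hasDerivWithinAt_nonneg (convex_Icc 0 u) (hvc.mono Icc_subset_Ici_self)
      (hderiv _ Icc_subset_Ici_self) fun x hx => hnonneg x (by rwa [interior_Icc] at hx),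
    strictAntiOn_of_hasDerivWithinAt_neg (convex_Ici u) (hvc.mono hIci) (hderiv _ hIci)
      fun x hx => hneg x (by rwa [interior_Ici] at hx)⟩

theorem stmt_6_general (σ η αh h r a β : ℝ) (hσ : 0 < σ) (hη : 0 < η)
    (hr : 0 < r)
    (hcase : (-(αh / 4) * r < a ∧ 0 ≤ β) ∨
      (a ≤ -(αh / 4) * r ∧ -a * r - αh / 4 * r ^ 2 < β))
    (v v' : ℝ → ℝ) (hIVP : IsIVP σ η αh h r a β v v') :
    (∃ xβ, 0 ≤ xβ ∧ MonotoneOn v (Set.Icc 0 xβ) ∧ StrictAntiOn v (Set.Ici xβ)) ↔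
      ∃ x₀ : ℝ, 0 < x₀ ∧ v' x₀ < 0 := by
  obtain ⟨hc, hv, hODE, hv₀⟩ := hIVP
  refine ⟨fun ⟨xβ, hxβ, _, hanti⟩ => exists_pos_lt_zero_of_strictAntiOn_Ici hv hxβ hanti, ?_⟩
  rintro ⟨x₀, hx₀, hv'x₀⟩
  have hv'₀ : 0 ≤ v' 0 := (initial_slope_pos hr hcase hODE hv₀).le
  obtain ⟨u, ⟨hu, -⟩, hv'u, hneg⟩ :=
    exists_zero_Ico_forall_Ioc_neg hx₀.le (hc.mono Icc_subset_Ici_self) hv'₀ hv'x₀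
  have hnonneg : ∀ x ∈ Ioo 0 u, 0 ≤ v' x := fun x hx => by
    by_contra! h
    exact (neg_of_nonneg_of_neg_of_le hσ.ne' hη hc hv hODE le_rfl hx.1.le hx.2.le hv'₀ h).ne hv'u
  have hneg' : ∀ x ∈ Ioi u, v' x < 0 := fun x hx => (le_total x x₀).elim
    (fun h => hneg x ⟨hx, h⟩)
    fun h => neg_of_nonneg_of_neg_of_le hσ.ne' hη hc hv hODE le_rfl hx₀.le h hv'₀ hv'x₀
  exact ⟨u, hu, monotoneOn_Icc_and_strictAntiOn_Ici hv hu hnonneg hneg'⟩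

/-- In Case 1 or Case 2, `β ∈ 𝓓` (i.e. `v_β` is nondecreasing on `[0,x_β]` and strictly
decreasing on `[x_β,∞)` for some `x_β ≥ 0`) iff `v_β′(x₀) < 0` for some `x₀ > 0`. -/
theorem stmt_6 (σ η αh h r a β : ℝ) (hσ : 0 < σ) (hη : 0 < η) (hαh : 0 < αh)
    (hh : 0 < h) (hr : 0 < r)
    (hcase : (-(αh / 4) * r < a ∧ 0 ≤ β) ∨
      (a ≤ -(αh / 4) * r ∧ -a * r - αh / 4 * r ^ 2 < β))
    (v v' : ℝ → ℝ) (hIVP : IsIVP σ η αh h r a β v v') :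
    (∃ xβ, 0 ≤ xβ ∧ MonotoneOn v (Set.Icc 0 xβ) ∧ StrictAntiOn v (Set.Ici xβ)) ↔
      ∃ x₀ : ℝ, 0 < x₀ ∧ v' x₀ < 0 :=
  stmt_6_general σ η αh h r a β hσ hη hr hcase v v' hIVP
end

section
/- Suppose the parameters are in Case 1 or Case 2 and β ∈ 𝓓. Then v_β attains its maximum over [0,∞), and sup_{x ≥ 0} v_β(x) < h/η. -/
open Set Filter

noncomputable section

/-!
Write `q(s) = riccatiQuad αh a β s = β + αh/4·s² - a·s`, so that
`(σ²/2)·v' = q(v) + η·y·(v - h/η)`, and suppose the maximum `v(x)` were at least `h/η > -r = v(0)`.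

If `q(h/η) ≤ 0`, then `h/η` is a supersolution: below it, `v' ≤ K·(v - h/η)` for a constant `K`,
so by Grönwall `v - h/η` stays negative on `[0, x]`, and `v` never reaches `h/η`.

If `q(h/η) > 0`: since `v' ≤ 0` past `x`, `q(v(x)) ≤ -η·x·(v(x) - h/η) ≤ 0`, so `q` has a zero
`c ∈ (h/η, v(x)]`. Past `x`, `v` cannot come down to `c`, where `v'` would be positive; but then
`η·y·(v - h/η) ≥ η·y·(c - h/η)` outgrows the bounded `-q(v)`, again forcing `v' > 0`.
-/

theorem neg_of_deriv_le_mul {w w' : ℝ → ℝ} {K a b : ℝ} (hw : ContinuousOn w (Icc a b))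
    (hderiv : ∀ y ∈ Ico a b, HasDerivWithinAt w (w' y) (Ici y) y)
    (hbound : ∀ y ∈ Ico a b, w' y ≤ K * w y) (ha : w a < 0) :
    ∀ y ∈ Icc a b, w y < 0 := by
  intro y hy
  calc w y ≤ gronwallBound (w a) K 0 (y - a) :=
        le_gronwallBound_of_liminf_deriv_right_le hw
          (fun z hz _ hr => (hderiv z hz).liminf_right_slope_le hr) le_rfl
          (by simpa using hbound) y hy
    _ = w a * Real.exp (K * (y - a)) := gronwallBound_ε0 _ _ _
    _ < 0 := mul_neg_of_neg_of_pos ha (Real.exp_pos _)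

theorem HasDerivWithinAt.nonpos_of_antitoneOn_Ici {g : ℝ → ℝ} {g' x y : ℝ} (hxy : x ≤ y)
    (hd : HasDerivWithinAt g g' (Ici y) y) (hg : AntitoneOn g (Ici x)) : g' ≤ 0 := by
  have hacc : AccPt y (𝓟 (Ici y)) := by
    simpa [accPt_principal_iff_nhdsWithin] using (inferInstance : (nhdsWithin y (Ioi y)).NeBot)
  exact hd.nonpos_of_antitoneOn hacc (hg.mono (Ici_subset_Ici.mpr hxy))

def riccatiQuad (αh a β s : ℝ) : ℝ := β + αh / 4 * s ^ 2 - a * s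

namespace IsIVP

variable {σ η αh h r a β : ℝ} {v v' : ℝ → ℝ}

theorem continuousOn (hv : IsIVP σ η αh h r a β v v') : ContinuousOn v (Ici 0) :=
  fun y hy => (hv.2.1 y hy).continuousWithinAt

theorem apply_zero (hv : IsIVP σ η αh h r a β v v') : v 0 = -r := hv.2.2.2

theorem hasDerivWithinAt_Ici (hv : IsIVP σ η αh h r a β v v') {y : ℝ} (hy : 0 ≤ y) :
    HasDerivWithinAt v (v' y) (Ici y) y :=
  (hv.2.1 y hy).mono (Ici_subset_Ici.mpr hy)

theorem ode (hv : IsIVP σ η αh h r a β v v') {y : ℝ} (hy : 0 ≤ y) :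
    σ ^ 2 / 2 * v' y = riccatiQuad αh a β (v y) + η * y * (v y - h / η) := by
  rw [hv.2.2.1 y hy, riccatiQuad]
  ring

theorem riccatiQuad_add_nonpos (hv : IsIVP σ η αh h r a β v v') (hσ : 0 < σ) {y : ℝ}
    (hy : 0 ≤ y) (hd : v' y ≤ 0) : riccatiQuad αh a β (v y) + η * y * (v y - h / η) ≤ 0 := by
  rw [← hv.ode hy]
  exact mul_nonpos_of_nonneg_of_nonpos (by positivity) hd

theorem deriv_nonpos_of_antitoneOn (hv : IsIVP σ η αh h r a β v v') {x y : ℝ} (hx : 0 ≤ x)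
    (hxy : x ≤ y) (hanti : AntitoneOn v (Ici x)) : v' y ≤ 0 :=
  (hv.hasDerivWithinAt_Ici (hx.trans hxy)).nonpos_of_antitoneOn_Ici hxy hanti

/-- Below `h/η`, the right-hand side is at most
`riccatiQuad (v y) - riccatiQuad (h/η) = (v y - h/η) * (αh/4 * (v y + h/η) - a)`,
and `v y + h/η ≥ -r`. -/
theorem deriv_le_mul_sub (hv : IsIVP σ η αh h r a β v v') (hσ : 0 < σ) (hη : 0 < η)
    (hαh : 0 < αh) (hh : 0 < h) (hq : riccatiQuad αh a β (h / η) ≤ 0) {y : ℝ} (hy : 0 ≤ y)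
    (hlow : -r ≤ v y) (hup : v y ≤ h / η) :
    v' y ≤ -(2 / σ ^ 2 * (αh / 4 * r + a)) * (v y - h / η) := by
  have hH : 0 < h / η := div_pos hh hη
  have hode := hv.ode hy
  unfold riccatiQuad at hode hq
  have hσ2 : 0 < σ ^ 2 := by positivity
  have key : σ ^ 2 / 2 * v' y ≤ -(αh / 4 * r + a) * (v y - h / η) := by
    nlinarith [mul_nonneg (mul_nonneg hη.le hy) (sub_nonneg.mpr hup),
      mul_nonneg (mul_nonneg hαh.le (sub_nonneg.mpr hup)) (show 0 ≤ v y + h / η + r by linarith)]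
  calc v' y = 2 / σ ^ 2 * (σ ^ 2 / 2 * v' y) := by field_simp
    _ ≤ 2 / σ ^ 2 * (-(αh / 4 * r + a) * (v y - h / η)) := by gcongr
    _ = _ := by ring

theorem lt_of_monotoneOn_of_riccatiQuad_nonpos (hv : IsIVP σ η αh h r a β v v') (hσ : 0 < σ)
    (hη : 0 < η) (hαh : 0 < αh) (hh : 0 < h) (hr : 0 < r)
    (hq : riccatiQuad αh a β (h / η) ≤ 0) {t : ℝ} (ht : 0 ≤ t)
    (hmono : MonotoneOn v (Icc 0 t)) : v t < h / η := by
  by_contra! hge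
  have hv0 : v 0 < h / η := by
    rw [hv.apply_zero]
    linarith [div_pos hh hη]
  obtain ⟨s, ⟨hs0, hst⟩, hvs⟩ : h / η ∈ v '' Icc 0 t :=
    intermediate_value_Icc ht (hv.continuousOn.mono fun z hz => hz.1) ⟨hv0.le, hge⟩
  have hlow : ∀ y ∈ Icc 0 s, -r ≤ v y := fun y hy => by
    simpa [hv.apply_zero] using hmono ⟨le_rfl, ht⟩ ⟨hy.1, hy.2.trans hst⟩ hy.1
  have hup : ∀ y ∈ Icc 0 s, v y ≤ h / η := fun y hy => by
    simpa [hvs] using hmono ⟨hy.1, hy.2.trans hst⟩ ⟨hs0, hst⟩ hy.2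
  have hneg := neg_of_deriv_le_mul (w := fun y => v y - h / η) (w' := v')
    ((hv.continuousOn.mono fun z hz => hz.1).sub continuousOn_const)
    (fun y hy => (hv.hasDerivWithinAt_Ici hy.1).sub_const _)
    (fun y hy => hv.deriv_le_mul_sub hσ hη hαh hh hq hy.1 (hlow y (Ico_subset_Icc_self hy))
      (hup y (Ico_subset_Icc_self hy)))
    (sub_neg.mpr hv0) s ⟨hs0, le_rfl⟩
  simp [hvs] at hneg

/-- At a crossing of `c` the right-hand side of the ODE would be `η * y * (c - h/η) > 0`. -/
theorem le_of_antitoneOn_of_riccatiQuad_eq_zero (hv : IsIVP σ η αh h r a β v v') (hσ : 0 < σ)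
    (hη : 0 < η) {x c : ℝ} (hx : 0 < x) (hanti : AntitoneOn v (Ici x))
    (hc : riccatiQuad αh a β c = 0) (hHc : h / η < c) (hcx : c ≤ v x) {y : ℝ} (hxy : x ≤ y) :
    c ≤ v y := by
  by_contra! hlt
  obtain ⟨z, ⟨hxz, -⟩, hvz⟩ : c ∈ v '' Icc x y :=
    intermediate_value_Icc' hxy (hv.continuousOn.mono fun z hz => hx.le.trans hz.1) ⟨hlt.le, hcx⟩
  have hz := hv.riccatiQuad_add_nonpos hσ (hx.le.trans hxz)
    (hv.deriv_nonpos_of_antitoneOn hx.le hxz hanti)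
  rw [hvz, hc] at hz
  nlinarith [mul_pos (mul_pos hη (hx.trans_le hxz)) (sub_pos.mpr hHc)]

theorem lt_of_antitoneOn_of_riccatiQuad_pos (hv : IsIVP σ η αh h r a β v v') (hσ : 0 < σ)
    (hη : 0 < η) (hh : 0 < h) (hr : 0 < r) (hq : 0 < riccatiQuad αh a β (h / η)) {x : ℝ}
    (hx : 0 ≤ x) (hanti : AntitoneOn v (Ici x)) : v x < h / η := by
  by_contra! hge
  have hH : 0 < h / η := div_pos hh hη
  have hx_pos : 0 < x := by
    refine hx.lt_of_ne ?_
    rintro rfl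
    rw [hv.apply_zero] at hge
    linarith
  have hpast : ∀ y, x ≤ y → riccatiQuad αh a β (v y) + η * y * (v y - h / η) ≤ 0 :=
    fun y hy =>
      hv.riccatiQuad_add_nonpos hσ (hx.trans hy) (hv.deriv_nonpos_of_antitoneOn hx hy hanti)
  have hqx : riccatiQuad αh a β (v x) ≤ 0 := by
    nlinarith [hpast x le_rfl, mul_nonneg (mul_nonneg hη.le hx) (sub_nonneg.mpr hge)]
  have hq_cont : Continuous (riccatiQuad αh a β) := by
    unfold riccatiQuad
    fun_prop
  obtain ⟨c, ⟨hHc, hcx⟩, hc⟩ : (0 : ℝ) ∈ riccatiQuad αh a β '' Icc (h / η) (v x) :=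
    intermediate_value_Icc' hge hq_cont.continuousOn ⟨hqx, hq.le⟩
  have hHc : h / η < c := hHc.lt_of_ne (by rintro rfl; linarith)
  obtain ⟨M, hM⟩ : BddAbove ((fun s => -riccatiQuad αh a β s) '' Icc c (v x)) :=
    isCompact_Icc.bddAbove_image hq_cont.neg.continuousOn
  set Y := max x (M / (η * (c - h / η))) + 1
  have hxY : x ≤ Y := (le_max_left _ _).trans (lt_add_one _).le
  have hMY : M < η * Y * (c - h / η) := by
    have : M / (η * (c - h / η)) < Y := (le_max_right _ _).trans_lt (lt_add_one _)
    rw [div_lt_iff₀ (mul_pos hη (sub_pos.mpr hHc))] at this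
    linarith
  have hcY : c ≤ v Y := hv.le_of_antitoneOn_of_riccatiQuad_eq_zero hσ hη hx_pos hanti hc hHc hcx hxY
  have hqY : -riccatiQuad αh a β (v Y) ≤ M := hM ⟨v Y, ⟨hcY, hanti self_mem_Ici hxY hxY⟩, rfl⟩
  nlinarith [hpast Y hxY, mul_nonneg (mul_nonneg hη.le (hx.trans hxY)) (sub_nonneg.mpr hcY)]

end IsIVP

theorem stmt_7_general (σ η αh h r a β : ℝ) (hσ : 0 < σ) (hη : 0 < η) (hαh : 0 < αh)
    (hh : 0 < h) (hr : 0 < r)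
    (v v' : ℝ → ℝ) (hIVP : IsIVP σ η αh h r a β v v')
    (hD : ∃ xβ, 0 ≤ xβ ∧ MonotoneOn v (Set.Icc 0 xβ) ∧ StrictAntiOn v (Set.Ici xβ)) :
    ∃ x : ℝ, 0 ≤ x ∧ (∀ y : ℝ, 0 ≤ y → v y ≤ v x) ∧ v x < h / η := by
  obtain ⟨x, hx, hmono, hanti⟩ := hD
  have hmax : ∀ y : ℝ, 0 ≤ y → v y ≤ v x := fun y hy =>
    (le_total y x).elim (fun hyx => hmono ⟨hy, hyx⟩ ⟨hx, le_rfl⟩ hyx)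
      (fun hxy => hanti.antitoneOn self_mem_Ici hxy hxy)
  refine ⟨x, hx, hmax, ?_⟩
  rcases le_or_gt (riccatiQuad αh a β (h / η)) 0 with hq | hq
  · exact hIVP.lt_of_monotoneOn_of_riccatiQuad_nonpos hσ hη hαh hh hr hq hx hmono
  · exact hIVP.lt_of_antitoneOn_of_riccatiQuad_pos hσ hη hh hr hq hx hanti.antitoneOn

/-- In Case 1 or Case 2, if `β ∈ 𝓓` then `v_β` attains its maximum over `[0,∞)` and
`sup_{x ≥ 0} v_β(x) < h/η`. -/
theorem stmt_7 (σ η αh h r a β : ℝ) (hσ : 0 < σ) (hη : 0 < η) (hαh : 0 < αh)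
    (hh : 0 < h) (hr : 0 < r)
    (hcase : (-(αh / 4) * r < a ∧ 0 ≤ β) ∨
      (a ≤ -(αh / 4) * r ∧ -a * r - αh / 4 * r ^ 2 < β))
    (v v' : ℝ → ℝ) (hIVP : IsIVP σ η αh h r a β v v')
    (hD : ∃ xβ, 0 ≤ xβ ∧ MonotoneOn v (Set.Icc 0 xβ) ∧ StrictAntiOn v (Set.Ici xβ)) :
    ∃ x : ℝ, 0 ≤ x ∧ (∀ y : ℝ, 0 ≤ y → v y ≤ v x) ∧ v x < h / η :=
  stmt_7_general σ η αh h r a β hσ hη hαh hh hr v v' hIVP hD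
end
end

section
/- In Case i of the parameter assumption (i = 1, 2), the infimum β*_i = inf 𝓘_i is strictly positive. -/
/-!
For large `β` the quadratic term makes every solution of IVP(β) blow up before time `1`
(`arctan (k v) - μ y` is nondecreasing with `μ ≥ π`), so IVP(β) has no solution and `β ∈ 𝓘`
vacuously: both sets are nonempty.

For `0 ≤ β` below a positive threshold the solution exists on all of `[0, ∞)` and stays `≤ 0`.
It is obtained by solving the equation with the state clamped to the band
`[lowerEnvelope y, 0]`, whose field is bounded and Lipschitz on every strip (Picard–Lindelöf on
`[0, n]`, glued over `n`), and then checking by comparison that the clamped solution never leaves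
the band. A monotone nonpositive solution stays in `[-r, 0]`, where the field is negative once
`η y ≥ a` and `h y > β + αh r² / 4`; hence such `β ∉ 𝓘`. Both admissible ranges lie in `[0, ∞)`,
so every element of `𝓘_i` is at least the threshold.
-/

open Set Filter

noncomputable section

/-- `β ∈ 𝓓`: every solution of IVP(β) is nondecreasing on `[0, x_β]` and
strictly decreasing on `[x_β, ∞)` for some `x_β ≥ 0`. -/
def MemD (σ η αh h r a β : ℝ) : Prop :=
  ∀ v v' : ℝ → ℝ, IsIVP σ η αh h r a β v v' →
    ∃ xβ, 0 ≤ xβ ∧ MonotoneOn v (Set.Icc 0 xβ) ∧ StrictAntiOn v (Set.Ici xβ)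

/-- `β ∈ 𝓘`: every solution of IVP(β) is nondecreasing on `[0, ∞)`. -/
def MemI (σ η αh h r a β : ℝ) : Prop :=
  ∀ v v' : ℝ → ℝ, IsIVP σ η αh h r a β v v' → MonotoneOn v (Set.Ici 0)

open Function Real Topology
open scoped NNReal

section GlobalExistence

variable {E : Type*} [NormedAddCommGroup E] [NormedSpace ℝ E]
  {f : ℝ → E → E} {T : ℝ} {L K : ℝ≥0}

theorem HasDerivWithinAt.Ici_of_Icc {u : ℝ → E} {u' : E} {a b t : ℝ}
    (hu : HasDerivWithinAt u u' (Icc a b) t) (ht : t ∈ Ico a b) :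
    HasDerivWithinAt u u' (Ici t) t :=
  hu.mono_of_mem_nhdsWithin <| mem_of_superset (Icc_mem_nhdsGE ht.2) (Icc_subset_Icc_left ht.1)

theorem exists_hasDerivWithinAt_Icc_of_norm_le_of_lipschitzWith [CompleteSpace E] (hT : 0 ≤ T)
    (hcont : ∀ x, ContinuousOn (f · x) (Icc 0 T)) (hL : ∀ t ∈ Icc 0 T, ∀ x, ‖f t x‖ ≤ L)
    (hK : ∀ t ∈ Icc 0 T, LipschitzWith K (f t)) (x₀ : E) :
    ∃ u : ℝ → E, u 0 = x₀ ∧ ∀ t ∈ Icc 0 T, HasDerivWithinAt u (f t (u t)) (Icc 0 T) t := by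
  lift T to ℝ≥0 using hT
  have hpl : IsPicardLindelof f (tmin := 0) (tmax := T) ⟨0, left_mem_Icc.2 T.2⟩ x₀ (L * T) 0 L K :=
    { lipschitzOnWith := fun t ht => (hK t ht).lipschitzOnWith
      continuousOn := fun x _ => hcont x
      norm_le := fun t ht x _ => hL t ht x
      mul_max_le := by simp }
  exact hpl.exists_eq_forall_mem_Icc_hasDerivWithinAt₀

theorem eqOn_Icc_of_hasDerivWithinAt (hK : ∀ t ∈ Icc 0 T, LipschitzWith K (f t)) {u v : ℝ → E}
    (hu : ∀ t ∈ Icc 0 T, HasDerivWithinAt u (f t (u t)) (Icc 0 T) t)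
    (hv : ∀ t ∈ Icc 0 T, HasDerivWithinAt v (f t (v t)) (Icc 0 T) t) (h0 : u 0 = v 0) :
    EqOn u v (Icc 0 T) :=
  ODE_solution_unique_of_mem_Icc_right (s := fun _ => univ)
    (fun t ht => (hK t (Ico_subset_Icc_self ht)).lipschitzOnWith)
    (fun t ht => (hu t ht).continuousWithinAt)
    (fun t ht => (hu t (Ico_subset_Icc_self ht)).Ici_of_Icc ht) (fun _ _ => trivial)
    (fun t ht => (hv t ht).continuousWithinAt)
    (fun t ht => (hv t (Ico_subset_Icc_self ht)).Ici_of_Icc ht) (fun _ _ => trivial) h0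

theorem exists_hasDerivWithinAt_Ici_of_norm_le_of_lipschitzWith [CompleteSpace E]
    (hcont : ∀ x, ContinuousOn (f · x) (Ici 0))
    (hbd : ∀ T, ∃ L K : ℝ≥0, ∀ t ∈ Icc 0 T, (∀ x, ‖f t x‖ ≤ L) ∧ LipschitzWith K (f t))
    (x₀ : E) :
    ∃ u : ℝ → E, u 0 = x₀ ∧ ∀ t ∈ Ici 0, HasDerivWithinAt u (f t (u t)) (Ici 0) t := by
  choose L K hLK using hbd
  have hsol (n : ℕ) := exists_hasDerivWithinAt_Icc_of_norm_le_of_lipschitzWith n.cast_nonneg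
    (fun x => (hcont x).mono Icc_subset_Ici_self) (fun t ht => (hLK n t ht).1)
    (fun t ht => (hLK n t ht).2) x₀
  choose sol hsol0 hsol using hsol
  have hagree (m n : ℕ) (hmn : m ≤ n) : EqOn (sol m) (sol n) (Icc 0 m) := by
    have hsub : Icc (0 : ℝ) m ⊆ Icc 0 n := Icc_subset_Icc_right (by exact_mod_cast hmn)
    exact eqOn_Icc_of_hasDerivWithinAt (fun t ht => (hLK m t ht).2) (hsol m)
      (fun t ht => (hsol n t (hsub ht)).mono hsub) ((hsol0 m).trans (hsol0 n).symm)
  set u : ℝ → E := fun t => sol (⌈t⌉₊) t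
  have hu (n : ℕ) : EqOn u (sol n) (Icc 0 n) := fun t ht => by
    have hceil : t ≤ ⌈t⌉₊ := Nat.le_ceil t
    rcases le_total ⌈t⌉₊ n with h | h
    · exact hagree _ n h ⟨ht.1, hceil⟩
    · exact (hagree n _ h ht).symm
  refine ⟨u, (hu 0 (by simp)).trans (hsol0 0), fun t ht => ?_⟩
  set n := ⌈t⌉₊ + 1
  have htn : t < n := by push_cast [n]; linarith [Nat.le_ceil t]
  have hnhds : Icc (0 : ℝ) n ∈ 𝓝[Ici 0] t := by
    rw [← Ici_inter_Iic]
    exact inter_mem_nhdsWithin _ (Iic_mem_nhds htn)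
  rw [hu n ⟨ht, htn.le⟩]
  exact ((hsol n t ⟨ht, htn.le⟩).mono_of_mem_nhdsWithin hnhds).congr_of_eventuallyEq
    (eventually_of_mem hnhds (hu n)) (hu n ⟨ht, htn.le⟩)

end GlobalExistence

theorem exists_norm_le_lipschitzWith_comp {f : ℝ → ℝ → ℝ} (hf : ContDiff ℝ 1 (uncurry f))
    {s : Set ℝ} (hs : IsCompact s) (hsc : Convex ℝ s) {T : ℝ} {g : ℝ → ℝ → ℝ}
    (hg : ∀ t ∈ Icc 0 T, LipschitzWith 1 (g t)) (hgs : ∀ t ∈ Icc 0 T, ∀ x, g t x ∈ s) :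
    ∃ L K : ℝ≥0, ∀ t ∈ Icc 0 T,
      (∀ x, ‖f t (g t x)‖ ≤ L) ∧ LipschitzWith K (fun x => f t (g t x)) := by
  have hcpt : IsCompact (Icc 0 T ×ˢ s) := isCompact_Icc.prod hs
  obtain ⟨K, hK⟩ := hf.contDiffOn.exists_lipschitzOnWith one_ne_zero
    ((convex_Icc 0 T).prod hsc) hcpt
  obtain ⟨L, hL⟩ := hcpt.exists_bound_of_continuousOn hf.continuous.continuousOn
  refine ⟨L.toNNReal, K, fun t ht => ⟨fun x => ?_, ?_⟩⟩
  · exact (hL (t, g t x) ⟨ht, hgs t ht x⟩).trans (Real.le_coe_toNNReal L)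
  · have := hK.comp ((LipschitzWith.prodMk_left t).comp (hg t ht)).lipschitzOnWith
      (s := univ) fun x _ => ⟨ht, hgs t ht x⟩
    rw [mul_one, mul_one, lipschitzOnWith_univ] at this
    exact this

theorem mul_sqrt_lt_pi_of_sq_add_le_deriv {u u' : ℝ → ℝ} {c₁ c₂ T : ℝ} (hc₁ : 0 < c₁)
    (hc₂ : 0 < c₂) (hu : ContinuousOn u (Icc 0 T))
    (hu' : ∀ t ∈ Ico 0 T, HasDerivWithinAt u (u' t) (Ici t) t)
    (hbound : ∀ t ∈ Ico 0 T, c₁ * u t ^ 2 + c₂ ≤ u' t) : T * √(c₁ * c₂) < π := by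
  rcases lt_or_ge T 0 with hT | hT
  · nlinarith [Real.sqrt_nonneg (c₁ * c₂), Real.pi_pos]
  set μ := √(c₁ * c₂)
  have hμ : 0 < μ := Real.sqrt_pos.2 (mul_pos hc₁ hc₂)
  have hμsq : μ ^ 2 = c₁ * c₂ := Real.sq_sqrt (mul_pos hc₁ hc₂).le
  -- `arctan (k * u t) - μ t` is nondecreasing, with `k = μ / c₂`
  set k := μ / c₂
  have hk : 0 < k := div_pos hμ hc₂
  have hkey : ∀ x, k * (c₁ * x ^ 2 + c₂) = μ * (1 + (k * x) ^ 2) := fun x => by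
    simp only [k]; field_simp; rw [hμsq]; ring
  have hcomp := image_le_of_deriv_right_le_deriv_boundary (a := 0) (b := T)
    (f := fun t => Real.arctan (k * u 0) + μ * t) (f' := fun _ => μ)
    (B := fun t => Real.arctan (k * u t))
    (B' := fun t => 1 / (1 + (k * u t) ^ 2) * (k * u' t))
    (by fun_prop) (fun t _ => ((hasDerivAt_id t).const_mul μ).const_add _ |>.hasDerivWithinAt
      |>.congr_deriv (by simp)) (by simp)
    (Real.continuous_arctan.comp_continuousOn (hu.const_smul k))
    (fun t ht => ((hu' t ht).const_mul k).arctan)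
    (fun t ht => by
      rw [one_div_mul_eq_div, le_div_iff₀ (by positivity), ← hkey]
      exact mul_le_mul_of_nonneg_left (hbound t ht) hk.le)
    (right_mem_Icc.2 hT)
  have := Real.arctan_lt_pi_div_two (k * u T)
  have := Real.neg_pi_div_two_lt_arctan (k * u 0)
  linarith

namespace RiccatiIVP

def field (σ η αh h a β y x : ℝ) : ℝ :=
  2 / σ ^ 2 * (β + αh / 4 * x ^ 2 + (η * y - a) * x - h * y)

def lowerRate (σ η αh h a : ℝ) : ℝ := 2 / σ ^ 2 * (h + 2 * (η + |a|) ^ 2 / αh)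

def lowerEnvelope (σ η αh h r a t : ℝ) : ℝ :=
  -r - lowerRate σ η αh h a / 3 * ((1 + t) ^ 3 - 1)

/-- Unlike `field`, bounded and globally Lipschitz on every strip `[0, T] × ℝ`; the solutions
of interest never leave the band `[lowerEnvelope y, 0]`, where the two fields agree. -/
def clampedField (σ η αh h r a β y x : ℝ) : ℝ :=
  field σ η αh h a β y (max (lowerEnvelope σ η αh h r a y) (min x 0))

variable {σ η αh h r a β : ℝ}

theorem _root_.IsIVP.eq_field (hσ : σ ≠ 0) (hη : η ≠ 0) {v v' : ℝ → ℝ}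
    (hv : IsIVP σ η αh h r a β v v') {y : ℝ} (hy : y ∈ Ici 0) :
    v' y = field σ η αh h a β y (v y) := by
  have := hv.2.2.1 y hy
  unfold field
  field_simp at this ⊢
  linear_combination this

theorem isIVP_of_hasDerivWithinAt (hσ : σ ≠ 0) (hη : η ≠ 0) {v : ℝ → ℝ} (hv0 : v 0 = -r)
    (hv : ∀ y ∈ Ici 0, HasDerivWithinAt v (field σ η αh h a β y (v y)) (Ici 0) y) :
    IsIVP σ η αh h r a β v (fun y => field σ η αh h a β y (v y)) := by
  have hvc : ContinuousOn v (Ici 0) := fun y hy => (hv y hy).continuousWithinAt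
  refine ⟨?_, hv, fun y _ => ?_, hv0⟩
  · unfold field; fun_prop
  · unfold field; field_simp; ring

theorem contDiff_field : ContDiff ℝ 1 (uncurry (field σ η αh h a β)) := by
  unfold field; fun_prop

theorem field_ge (hη : 0 ≤ η) (hαh : 0 < αh) {y : ℝ} (hy : 0 ≤ y) (x : ℝ) :
    2 / σ ^ 2 * (β + αh / 8 * x ^ 2 - 2 * (η + |a|) ^ 2 * (1 + y) ^ 2 / αh - h * y) ≤
      field σ η αh h a β y x := by
  have hsq : (η * y - a) ^ 2 ≤ ((η + |a|) * (1 + y)) ^ 2 := by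
    apply sq_le_sq' <;> nlinarith [le_abs_self a, neg_abs_le a, abs_nonneg a, mul_nonneg hη hy]
  have hcompl : αh / 8 * x ^ 2 - 2 * (η * y - a) ^ 2 / αh ≤ αh / 4 * x ^ 2 + (η * y - a) * x := by
    have : αh / 4 * x ^ 2 + (η * y - a) * x - (αh / 8 * x ^ 2 - 2 * (η * y - a) ^ 2 / αh) =
        (αh * x + 4 * (η * y - a)) ^ 2 / (8 * αh) := by field_simp; ring
    linarith [show 0 ≤ (αh * x + 4 * (η * y - a)) ^ 2 / (8 * αh) by positivity]
  have hdiv : 2 * (η * y - a) ^ 2 / αh ≤ 2 * (η + |a|) ^ 2 * (1 + y) ^ 2 / αh := by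
    rw [mul_assoc, ← mul_pow]; gcongr
  unfold field
  gcongr ?_ * ?_
  linarith

theorem neg_lowerRate_mul_le_field (hη : 0 ≤ η) (hαh : 0 < αh) (hh : 0 ≤ h) (hβ : 0 ≤ β)
    {y : ℝ} (hy : 0 ≤ y) (x : ℝ) :
    -(lowerRate σ η αh h a * (1 + y) ^ 2) ≤ field σ η αh h a β y x := by
  refine le_trans ?_ (field_ge hη hαh hy x)
  have : h * y ≤ h * (1 + y) ^ 2 := by nlinarith [mul_nonneg hh (sq_nonneg y)]
  have : 2 * (η + |a|) ^ 2 * (1 + y) ^ 2 / αh = 2 * (η + |a|) ^ 2 / αh * (1 + y) ^ 2 := by ring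
  unfold lowerRate
  rw [neg_mul_eq_mul_neg, mul_assoc]
  gcongr
  nlinarith [sq_nonneg x]

theorem field_le (hη : 0 ≤ η) (hh : 0 ≤ h) {y x : ℝ} (hy : 0 ≤ y) (hx : x ≤ 0) :
    field σ η αh h a β y x ≤ 2 / σ ^ 2 * (β + αh / 4 * x ^ 2 - a * x) := by
  unfold field
  refine mul_le_mul_of_nonneg_left ?_ (by positivity)
  nlinarith [mul_nonneg hη hy]

theorem lowerRate_nonneg (hαh : 0 < αh) (hh : 0 ≤ h) : 0 ≤ lowerRate σ η αh h a := by
  unfold lowerRate; positivity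

theorem hasDerivAt_lowerEnvelope (t : ℝ) :
    HasDerivAt (lowerEnvelope σ η αh h r a) (-(lowerRate σ η αh h a * (1 + t) ^ 2)) t := by
  have h3 : HasDerivAt (fun t : ℝ => (1 + t) ^ 3) (3 * (1 + t) ^ 2) t := by
    simpa using ((hasDerivAt_id t).const_add 1).fun_pow 3
  exact (((h3.sub_const 1).const_mul (lowerRate σ η αh h a / 3)).const_sub (-r)).congr_deriv
    (by ring)

theorem lowerEnvelope_antitoneOn (hαh : 0 < αh) (hh : 0 ≤ h) :
    AntitoneOn (lowerEnvelope σ η αh h r a) (Ici 0) := fun s hs t _ hst => by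
  have := lowerRate_nonneg (σ := σ) (η := η) (a := a) hαh hh
  have : (1 + s) ^ 3 ≤ (1 + t) ^ 3 := by gcongr; linarith [mem_Ici.1 hs]
  unfold lowerEnvelope
  gcongr

theorem lowerEnvelope_nonpos (hαh : 0 < αh) (hh : 0 ≤ h) (hr : 0 ≤ r) {t : ℝ} (ht : 0 ≤ t) :
    lowerEnvelope σ η αh h r a t ≤ 0 := by
  have := lowerEnvelope_antitoneOn (σ := σ) (η := η) (r := r) (a := a) hαh hh self_mem_Ici ht ht
  simp only [lowerEnvelope, add_zero, one_pow, sub_self, mul_zero, sub_zero] at this ⊢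
  linarith

theorem exists_clampedField_solution (hαh : 0 < αh) (hh : 0 ≤ h) (hr : 0 ≤ r) :
    ∃ u : ℝ → ℝ, u 0 = -r ∧
      ∀ t ∈ Ici 0, HasDerivWithinAt u (clampedField σ η αh h r a β t (u t)) (Ici 0) t := by
  refine exists_hasDerivWithinAt_Ici_of_norm_le_of_lipschitzWith
    (fun x => Continuous.continuousOn ?_) (fun T => ?_) (-r)
  · unfold clampedField field lowerEnvelope; fun_prop
  have hlow {t : ℝ} (ht : t ∈ Icc 0 T) :
      lowerEnvelope σ η αh h r a T ≤ lowerEnvelope σ η αh h r a t :=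
    lowerEnvelope_antitoneOn hαh hh ht.1 (ht.1.trans ht.2) ht.2
  exact exists_norm_le_lipschitzWith_comp contDiff_field isCompact_Icc (convex_Icc _ _)
    (fun t _ => (LipschitzWith.id.min_const 0).const_max _)
    (fun t ht x => ⟨(hlow ht).trans (le_max_left _ _),
      max_le (lowerEnvelope_nonpos hαh hh hr ht.1) (min_le_right _ _)⟩)

section ClampedSolution

variable {u : ℝ → ℝ} (hu0 : u 0 = -r)
  (hu : ∀ t ∈ Ici 0, HasDerivWithinAt u (clampedField σ η αh h r a β t (u t)) (Ici 0) t)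
include hu0 hu

theorem lowerEnvelope_le_of_clampedField (hη : 0 ≤ η) (hαh : 0 < αh) (hh : 0 ≤ h)
    (hβ : 0 ≤ β) {t : ℝ} (ht : 0 ≤ t) : lowerEnvelope σ η αh h r a t ≤ u t :=
  image_le_of_deriv_right_le_deriv_boundary
    (fun s _ => (hasDerivAt_lowerEnvelope s).continuousAt.continuousWithinAt)
    (fun s _ => (hasDerivAt_lowerEnvelope s).hasDerivWithinAt)
    (by simp [lowerEnvelope, hu0])
    (fun s hs => (hu s hs.1).continuousWithinAt.mono Icc_subset_Ici_self)
    (fun s hs => (hu s hs.1).mono (Ici_subset_Ici.2 hs.1))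
    (fun s hs => neg_lowerRate_mul_le_field hη hαh hh hβ hs.1 _)
    ⟨ht, le_rfl⟩

/-- Up to time `β / h` the solution climbs at rate at most `C`, so it is still negative there;
afterwards `field y 0 = 2 / σ ^ 2 * (β - h y) < 0` keeps it from crossing `0`. -/
theorem nonpos_of_clampedField (hσ : σ ≠ 0) (hαh : 0 < αh) (hh : 0 < h) (hr : 0 < r) {C : ℝ}
    (hC0 : 0 ≤ C) (hC : ∀ y ∈ Icc 0 (β / h), ∀ x, clampedField σ η αh h r a β y x ≤ C)
    (hβC : C * (β / h) < r) {t : ℝ} (ht : 0 ≤ t) : u t ≤ 0 := by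
  have hcont (T : ℝ) : ContinuousOn u (Icc 0 T) :=
    fun s hs => (hu s hs.1).continuousWithinAt.mono Icc_subset_Ici_self
  have hright (s : ℝ) (hs : 0 ≤ s) :
      HasDerivWithinAt u (clampedField σ η αh h r a β s (u s)) (Ici s) s :=
    (hu s hs).mono (Ici_subset_Ici.2 hs)
  have hneg : ∀ s ∈ Icc 0 (β / h), u s < 0 := fun s hs => by
    have := image_le_of_deriv_right_le_deriv_boundary (hcont s) (fun s' hs' => hright s' hs'.1)
      (B := fun s => -r + C * s) (by simp [hu0]) (by fun_prop)
      (fun s _ => ((hasDerivAt_id s).const_mul C).const_add (-r) |>.hasDerivWithinAt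
        |>.congr_deriv (mul_one C))
      (fun s' hs' => hC s' ⟨hs'.1, hs'.2.le.trans hs.2⟩ _) ⟨hs.1, le_rfl⟩
    nlinarith [mul_le_mul_of_nonneg_left hs.2 hC0]
  refine image_le_of_deriv_right_lt_deriv_boundary (hcont t) (fun s hs => hright s hs.1)
    (B := fun _ => 0) (by simp [hu0, hr.le]) (fun _ => hasDerivAt_const _ _)
    (fun s hs hus => ?_) ⟨ht, le_rfl⟩
  have hβs : β / h < s := not_le.1 fun h' => (hneg s ⟨hs.1, h'⟩).ne hus
  rw [hus, clampedField, min_self,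
    max_eq_right (lowerEnvelope_nonpos hαh hh.le hr.le hs.1)]
  unfold field
  rw [div_lt_iff₀ hh] at hβs
  have : 0 < 2 / σ ^ 2 := by positivity
  nlinarith

theorem isIVP_of_clampedField (hσ : σ ≠ 0) (hη : η ≠ 0)
    (hlow : ∀ t ∈ Ici 0, lowerEnvelope σ η αh h r a t ≤ u t) (hup : ∀ t ∈ Ici 0, u t ≤ 0) :
    IsIVP σ η αh h r a β u (fun y => field σ η αh h a β y (u y)) :=
  isIVP_of_hasDerivWithinAt hσ hη hu0 fun t ht => by
    simpa [clampedField, min_eq_left (hup t ht), max_eq_right (hlow t ht)] using hu t ht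

end ClampedSolution

theorem exists_clampedField_le (hη : 0 ≤ η) (hαh : 0 < αh) (hh : 0 < h) (hr : 0 ≤ r) :
    ∃ C, 0 ≤ C ∧ ∀ β ≤ 1, ∀ y ∈ Icc 0 (1 / h), ∀ x, clampedField σ η αh h r a β y x ≤ C := by
  set m := lowerEnvelope σ η αh h r a (1 / h)
  have hm : m ≤ 0 := lowerEnvelope_nonpos hαh hh.le hr (by positivity)
  obtain ⟨C, hC⟩ := isCompact_Icc.exists_bound_of_continuousOn (s := Icc m 0)
    (f := fun x => 2 / σ ^ 2 * (1 + αh / 4 * x ^ 2 - a * x)) (by fun_prop)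
  refine ⟨C, (norm_nonneg _).trans (hC 0 ⟨hm, le_rfl⟩), fun β hβ y hy x => ?_⟩
  set x' := max (lowerEnvelope σ η αh h r a y) (min x 0)
  have hx' : x' ∈ Icc m 0 :=
    ⟨(lowerEnvelope_antitoneOn hαh hh.le hy.1 (mem_Ici.2 (by positivity)) hy.2).trans
      (le_max_left _ _), max_le (lowerEnvelope_nonpos hαh hh.le hr hy.1) (min_le_right _ _)⟩
  calc clampedField σ η αh h r a β y x
      ≤ 2 / σ ^ 2 * (β + αh / 4 * x' ^ 2 - a * x') := field_le hη hh.le hy.1 hx'.2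
    _ ≤ 2 / σ ^ 2 * (1 + αh / 4 * x' ^ 2 - a * x') := by gcongr
    _ ≤ C := (le_abs_self _).trans (hC x' hx')

theorem exists_pos_forall_exists_isIVP_nonpos (hσ : 0 < σ) (hη : 0 < η) (hαh : 0 < αh)
    (hh : 0 < h) (hr : 0 < r) :
    ∃ c > 0, ∀ β, 0 ≤ β → β < c →
      ∃ v v' : ℝ → ℝ, IsIVP σ η αh h r a β v v' ∧ ∀ y ∈ Ici 0, v y ≤ 0 := by
  obtain ⟨C, hC0, hC⟩ := exists_clampedField_le (σ := σ) (a := a) hη.le hαh hh hr.le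
  refine ⟨min 1 (r * h / (C + 1)), lt_min one_pos (by positivity), fun β hβ hβc => ?_⟩
  have hβ1 : β ≤ 1 := hβc.le.trans (min_le_left _ _)
  have hβC : C * (β / h) < r := by
    have := hβc.trans_le (min_le_right _ _)
    rw [lt_div_iff₀ (by positivity)] at this
    rw [mul_div_assoc', div_lt_iff₀ hh]
    nlinarith
  obtain ⟨u, hu0, hu⟩ := exists_clampedField_solution (σ := σ) (η := η) (a := a) (β := β)
    hαh hh.le hr.le
  have hup (t : ℝ) (ht : t ∈ Ici 0) : u t ≤ 0 :=
    nonpos_of_clampedField hu0 hu hσ.ne' hαh hh hr hC0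
      (fun y hy => hC β hβ1 y ⟨hy.1, hy.2.trans (div_le_div_of_nonneg_right hβ1 hh.le)⟩) hβC ht
  exact ⟨u, _, isIVP_of_clampedField hu0 hu hσ.ne' hη.ne'
    (fun t ht => lowerEnvelope_le_of_clampedField hu0 hu hη.le hαh hh.le hβ ht) hup, hup⟩

/-- A monotone solution stays in `[-r, 0]`, but there the field is negative for large `y`. -/
theorem not_monotoneOn_of_nonpos (hσ : σ ≠ 0) (hη : 0 < η) (hαh : 0 ≤ αh) (hh : 0 < h)
    {v v' : ℝ → ℝ} (hv : IsIVP σ η αh h r a β v v') (hv0 : ∀ y ∈ Ici 0, v y ≤ 0) :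
    ¬MonotoneOn v (Ici 0) := fun hmono => by
  obtain ⟨y, hy, hya, hyβ⟩ := ((eventually_ge_atTop 0).and
    (((tendsto_id.const_mul_atTop hη).eventually_ge_atTop a).and
      ((tendsto_id.const_mul_atTop hh).eventually_gt_atTop (β + αh / 4 * r ^ 2)))).exists
  have hderiv : 0 ≤ v' y := (hv.2.1 y hy).derivWithin (uniqueDiffOn_Ici 0 y hy) ▸
    hmono.derivWithin_nonneg
  have hvr : -r ≤ v y := hv.2.2.2 ▸ hmono self_mem_Ici hy hy
  have hvy := hv0 y hy
  rw [hv.eq_field hσ hη.ne' hy, field] at hderiv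
  have : (η * y - a) * v y ≤ 0 := mul_nonpos_of_nonneg_of_nonpos (by simpa using hya) hvy
  have : αh / 4 * v y ^ 2 ≤ αh / 4 * r ^ 2 :=
    mul_le_mul_of_nonneg_left (by nlinarith) (by positivity)
  have : 0 < 2 / σ ^ 2 := by positivity
  simp only [id] at hyβ
  nlinarith

theorem exists_pos_forall_memI_le (hσ : 0 < σ) (hη : 0 < η) (hαh : 0 < αh) (hh : 0 < h)
    (hr : 0 < r) : ∃ c > 0, ∀ β, 0 ≤ β → MemI σ η αh h r a β → c ≤ β := by
  obtain ⟨c, hc, hex⟩ := exists_pos_forall_exists_isIVP_nonpos (a := a) hσ hη hαh hh hr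
  refine ⟨c, hc, fun β hβ hI => not_lt.1 fun hβc => ?_⟩
  obtain ⟨v, v', hv, hv0⟩ := hex β hβ hβc
  exact not_monotoneOn_of_nonpos hσ.ne' hη hαh.le hh hv hv0 (hI v v' hv)

theorem mul_sq_add_le_field (hη : 0 ≤ η) (hαh : 0 < αh) (hh : 0 ≤ h) {t : ℝ}
    (ht : t ∈ Icc 0 1) (x : ℝ) :
    αh / (4 * σ ^ 2) * x ^ 2 + 2 / σ ^ 2 * (β - (h + 8 * (η + |a|) ^ 2 / αh)) ≤
      field σ η αh h a β t x := by
  have h1 : 2 * (η + |a|) ^ 2 * (1 + t) ^ 2 / αh ≤ 8 * (η + |a|) ^ 2 / αh := by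
    rw [show 8 * (η + |a|) ^ 2 = 2 * (η + |a|) ^ 2 * 4 by ring]
    gcongr
    nlinarith [ht.1, ht.2]
  have h2 : h * t ≤ h := mul_le_of_le_one_right hh ht.2
  calc αh / (4 * σ ^ 2) * x ^ 2 + 2 / σ ^ 2 * (β - (h + 8 * (η + |a|) ^ 2 / αh))
      = 2 / σ ^ 2 * (β + αh / 8 * x ^ 2 - 8 * (η + |a|) ^ 2 / αh - h) := by
        field_simp; ring
    _ ≤ 2 / σ ^ 2 * (β + αh / 8 * x ^ 2 - 2 * (η + |a|) ^ 2 * (1 + t) ^ 2 / αh - h * t) := by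
        gcongr 2 / σ ^ 2 * ?_; linarith
    _ ≤ field σ η αh h a β t x := field_ge hη hαh ht.1 x

/-- For large `β`, IVP(β) has no solution at all (it blows up before time `1`), so `β ∈ 𝓘`
vacuously. -/
theorem eventually_memI (hσ : σ ≠ 0) (hη : 0 < η) (hαh : 0 < αh) (hh : 0 ≤ h) :
    ∀ᶠ β in atTop, MemI σ η αh h r a β := by
  set K₀ := h + 8 * (η + |a|) ^ 2 / αh
  filter_upwards [eventually_gt_atTop (K₀ + 2 * π ^ 2 * σ ^ 4 / αh)] with β hβ v v' hv
  have hβK : 2 * π ^ 2 * σ ^ 4 / αh < β - K₀ := by linarith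
  have hc₂ : 0 < 2 / σ ^ 2 * (β - K₀) := by
    have : 0 < 2 * π ^ 2 * σ ^ 4 / αh := by positivity
    exact mul_pos (by positivity) (this.trans hβK)
  have hpi : π ≤ 1 * √(αh / (4 * σ ^ 2) * (2 / σ ^ 2 * (β - K₀))) := by
    rw [one_mul, ← Real.sqrt_sq pi_pos.le]
    gcongr
    calc π ^ 2 = αh / (2 * σ ^ 4) * (2 * π ^ 2 * σ ^ 4 / αh) := by field_simp
      _ ≤ αh / (2 * σ ^ 4) * (β - K₀) := by gcongr
      _ = αh / (4 * σ ^ 2) * (2 / σ ^ 2 * (β - K₀)) := by field_simp; ring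
  refine absurd hpi (mul_sqrt_lt_pi_of_sq_add_le_deriv (by positivity) hc₂
    (fun t ht => (hv.2.1 t ht.1).continuousWithinAt.mono Icc_subset_Ici_self)
    (fun t ht => (hv.2.1 t ht.1).mono (Ici_subset_Ici.2 ht.1)) (fun t ht => ?_)).not_ge
  rw [hv.eq_field hσ hη.ne' ht.1]
  exact mul_sq_add_le_field hη.le hαh hh (Ico_subset_Icc_self ht) (v t)

end RiccatiIVP

/-- In Case i (i = 1, 2), `β*_i = inf 𝓘_i` is strictly positive. -/
theorem stmt_16 (σ η αh h r a : ℝ) (hσ : 0 < σ) (hη : 0 < η) (hαh : 0 < αh)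
    (hh : 0 < h) (hr : 0 < r) :
    (-(αh / 4) * r < a →
      0 < sInf {β : ℝ | 0 ≤ β ∧ MemI σ η αh h r a β}) ∧
    (a ≤ -(αh / 4) * r →
      0 < sInf {β : ℝ | -a * r - αh / 4 * r ^ 2 < β ∧ MemI σ η αh h r a β}) := by
  obtain ⟨c, hc, hle⟩ := RiccatiIVP.exists_pos_forall_memI_le (a := a) hσ hη hαh hh hr
  have hlarge := RiccatiIVP.eventually_memI (r := r) (a := a) hσ.ne' hη hαh hh.le
  refine ⟨fun _ => ?_, fun hcase => ?_⟩
  · obtain ⟨β, hβI, hβ⟩ := (hlarge.and (eventually_ge_atTop 0)).exists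
    exact hc.trans_le (le_csInf ⟨β, hβ, hβI⟩ fun β hβ => hle β hβ.1 hβ.2)
  · have hβ₂ : 0 ≤ -a * r - αh / 4 * r ^ 2 := by nlinarith
    obtain ⟨β, hβI, hβ⟩ := (hlarge.and (eventually_gt_atTop (-a * r - αh / 4 * r ^ 2))).exists
    exact hc.trans_le (le_csInf ⟨β, hβ, hβI⟩ fun β hβ => hle β (hβ₂.trans hβ.1.le) hβ.2)
end
end
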